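/- If x G x' (i.e., x' = S₀(x), x' = S₁(x), x = S₀(x'), or x = S₁(x')) and x ∈ D(y), then x' ∈ D(y), where D(y) is the set of infinite sets pointwise below some forward S₀/S₁-iterate of y. Consequently, the entire E-equivalence class of y is contained in D(y). -/
import Mathlib


noncomputable def enum (x : Set ℕ) (n : ℕ) : ℕ := Nat.nth (· ∈ x) n
noncomputable def S0 (x : Set ℕ) : Set ℕ := Set.range (fun n => enum x (n+1))
noncomputable def S1 (x : Set ℕ) : Set ℕ := Set.range (fun n => enum x (2*n+1))
def sle (x y : Set ℕ) : Prop := ∀ n, enum x n ≤ enum y n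
def ll (a b : Set ℕ) : Prop := ∀ m, ∃ k, m < (a ∩ Set.Ioo (enum b k) (enum b (k+1))).ncard
def Estep (x y : Set ℕ) : Prop := x.Infinite ∧ (y = S0 x ∨ y = S1 x)
def E : Set ℕ → Set ℕ → Prop := Relation.EqvGen Estep
def G (x x' : Set ℕ) : Prop := x' = S0 x ∨ x' = S1 x ∨ x = S0 x' ∨ x = S1 x'
def toSet (f : ℕ → Bool) : Set ℕ := {n | f n = true}
noncomputable def Sb (b : Bool) : Set ℕ → Set ℕ := if b then S1 else S0
noncomputable def Siter : List Bool → Set ℕ → Set ℕ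
  | [], y => y
  | b :: rest, y => Siter rest (Sb b y)

def Dset (y : Set ℕ) : Set (Set ℕ) := {x | x.Infinite ∧ ∃ s : List Bool, sle x (Siter s y)}

/-! ### Auxiliary lemmas -/

lemma nth_range_strictMono (f : ℕ → ℕ) (hf : StrictMono f) (n : ℕ) :
    Nat.nth (· ∈ Set.range f) n = f n := by
  induction n using Nat.strong_induction_on with
  | _ n ih =>
    have h : IsLeast {x | (· ∈ Set.range f) x ∧
        ∀ k < n, Nat.nth (· ∈ Set.range f) k < x} (f n) := by
      constructor
      · refine ⟨⟨n, rfl⟩, fun k hk => ?_⟩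
        rw [ih k hk]; exact hf hk
      · rintro x ⟨⟨m, rfl⟩, hx⟩
        rcases lt_or_ge m n with hm | hm
        · have := hx m hm
          rw [ih m hm] at this
          exact absurd this (lt_irrefl _)
        · exact hf.monotone hm
    rw [Nat.nth_eq_sInf]
    exact h.csInf_eq

lemma enum_strictMono {x : Set ℕ} (hx : x.Infinite) : StrictMono (enum x) :=
  Nat.nth_strictMono hx

lemma enum_S0 {x : Set ℕ} (hx : x.Infinite) (n : ℕ) : enum (S0 x) n = enum x (n+1) := by
  have hf : StrictMono (fun n => enum x (n+1)) :=
    fun a b hab => (enum_strictMono hx) (by omega)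
  exact nth_range_strictMono _ hf n

lemma enum_S1 {x : Set ℕ} (hx : x.Infinite) (n : ℕ) : enum (S1 x) n = enum x (2*n+1) := by
  have hf : StrictMono (fun n => enum x (2*n+1)) :=
    fun a b hab => (enum_strictMono hx) (by omega)
  exact nth_range_strictMono _ hf n

lemma S0_infinite {x : Set ℕ} (hx : x.Infinite) : (S0 x).Infinite := by
  apply Set.infinite_range_of_injective
  intro a b hab
  exact Nat.succ_injective ((enum_strictMono hx).injective hab)

lemma S1_infinite {x : Set ℕ} (hx : x.Infinite) : (S1 x).Infinite := by
  apply Set.infinite_range_of_injective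
  intro a b hab
  have := (enum_strictMono hx).injective hab
  omega

lemma Sb_infinite {x : Set ℕ} (b : Bool) (hx : x.Infinite) : (Sb b x).Infinite := by
  cases b <;> simp [Sb] <;> [exact S0_infinite hx; exact S1_infinite hx]

lemma Siter_infinite {y : Set ℕ} (s : List Bool) (hy : y.Infinite) : (Siter s y).Infinite := by
  induction s generalizing y with
  | nil => exact hy
  | cons b rest ih => exact ih (Sb_infinite b hy)

lemma Siter_append (s : List Bool) (b : Bool) (y : Set ℕ) :
    Siter (s ++ [b]) y = Sb b (Siter s y) := by
  induction s generalizing y with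
  | nil => rfl
  | cons a rest ih => simpa [Siter] using ih (Sb a y)

lemma sle_Sb {x z : Set ℕ} (b : Bool) (hx : x.Infinite) (hz : z.Infinite)
    (h : sle x z) : sle (Sb b x) (Sb b z) := by
  cases b <;> intro n <;> simp only [Sb, if_true, if_false, Bool.false_eq_true] <;>
    [rw [enum_S0 hx, enum_S0 hz]; rw [enum_S1 hx, enum_S1 hz]] <;> exact h _

/-- A set lies below its `S0`/`S1` image. -/
lemma sle_self_Sb {x : Set ℕ} (b : Bool) (hx : x.Infinite) : sle x (Sb b x) := by
  cases b <;> intro n <;> simp only [Sb, if_true, if_false, Bool.false_eq_true] <;>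
    [rw [enum_S0 hx]; rw [enum_S1 hx]] <;>
    exact (enum_strictMono hx).monotone (by omega)

lemma sle_trans {a b c : Set ℕ} (h1 : sle a b) (h2 : sle b c) : sle a c :=
  fun n => (h1 n).trans (h2 n)

lemma mem_Dset_up {y x : Set ℕ} (b : Bool) (hy : y.Infinite) (hx : x.Infinite)
    (h : x ∈ Dset y) : Sb b x ∈ Dset y := by
  obtain ⟨_, s, hs⟩ := h
  refine ⟨Sb_infinite b hx, s ++ [b], ?_⟩
  rw [Siter_append]
  exact sle_Sb b hx (Siter_infinite s hy) hs

lemma mem_Dset_down {y x x' : Set ℕ} (b : Bool) (hx' : x'.Infinite)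
    (hb : x = Sb b x') (h : x ∈ Dset y) : x' ∈ Dset y := by
  obtain ⟨_, s, hs⟩ := h
  refine ⟨hx', s, sle_trans ?_ hs⟩
  rw [hb]
  exact sle_self_Sb b hx'

theorem stmt11 (y : Set ℕ) (hy : y.Infinite) :
    (∀ x x' : Set ℕ, x.Infinite → x'.Infinite → G x x' → x ∈ Dset y → x' ∈ Dset y) ∧
    (∀ z : Set ℕ, z.Infinite → E y z → z ∈ Dset y) := by
  have key : ∀ x x' : Set ℕ, x.Infinite → x'.Infinite → G x x' → x ∈ Dset y → x' ∈ Dset y := by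
    intro x x' hx hx' hG hmem
    rcases hG with h | h | h | h
    · subst h; exact mem_Dset_up false hy hx hmem
    · subst h; exact mem_Dset_up true hy hx hmem
    · exact mem_Dset_down false hx' h hmem
    · exact mem_Dset_down true hx' h hmem
  refine ⟨key, ?_⟩
  intro z _ hE
  have hyD : y ∈ Dset y := ⟨hy, [], fun n => le_rfl⟩
  have main : ∀ a b : Set ℕ, E a b → (a ∈ Dset y ↔ b ∈ Dset y) := by
    intro a b h
    induction h with
    | rel a b hab =>
      obtain ⟨ha, hb⟩ := hab
      constructor
      · intro hmem
        rcases hb with rfl | rfl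
        · exact mem_Dset_up false hy ha hmem
        · exact mem_Dset_up true hy ha hmem
      · intro hmem
        rcases hb with rfl | rfl
        · exact mem_Dset_down false ha rfl hmem
        · exact mem_Dset_down true ha rfl hmem
    | refl a => rfl
    | symm a b _ ih => exact ih.symm
    | trans a b c _ _ ih1 ih2 => exact ih1.trans ih2
  exact (main y z hE).mp hyD
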